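/- Let p be a positive integer, c ∈ ℝᵖ, Y ∈ ℝᵖ with nonnegative entries, and Ω a symmetric positive definite real p×p matrix. Define J on ℝᵖ × (0,∞)ᵖ by J(m, s) = Σ_{j=1}^p [ Y_j m_j − exp(c_j + m_j + s_j²/2) + log s_j − (1/2) Ω_{jj} s_j² ] − (1/2) mᵀ Ω m. Then J attains a global maximum on ℝᵖ × (0,∞)ᵖ, and the maximizer is unique: there exists a unique (m̂, ŝ) ∈ ℝᵖ × (0,∞)ᵖ such that J(m, s) ≤ J(m̂, ŝ) for all (m, s) ∈ ℝᵖ × (0,∞)ᵖ. -/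

import Mathlib

/-!
Strict concavity gives uniqueness: each summand of `J` is strictly concave in `(m_j, s_j)`
(through `log s_j` when the `s_j` differ and through `exp` when only the `m_j` do), and
`-½ mᵀΩm` is concave. For existence, dropping the exponentials bounds `J(m, s)` by
`(Yᵀm - ½ mᵀΩm) + Σ_j (log s_j - ½ Ω_jj s_j²)`; every piece is bounded above and tends to `-∞`
as `‖m‖ → ∞` or `s_j → 0, ∞`, so each superlevel set of `J` lies in a compact box inside
`ℝᵖ × (0, ∞)ᵖ`, on which the continuous `J` attains its maximum.
-/

open Matrix Real Set

variable {ι : Type*} [Fintype ι]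

lemma le_one_add_of_mul_sq_le {a b c t : ℝ} (ha : 0 < a) (h : a * t ^ 2 ≤ b * t + c) :
    t ≤ 1 + (|b| + |c|) / a := by
  by_contra! ht
  have hB : 0 ≤ (|b| + |c|) / a := by positivity
  have hab : |b| + |c| < a * t := (div_lt_iff₀' ha).1 (by linarith)
  nlinarith [le_abs_self b, le_abs_self c, abs_nonneg c]

lemma mul_sub_mul_sq_le {a : ℝ} (ha : 0 < a) (b t : ℝ) : b * t - a * t ^ 2 ≤ b ^ 2 / (4 * a) := by
  rw [le_div_iff₀ (by positivity)]
  nlinarith [sq_nonneg (2 * a * t - b)]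

lemma log_sub_half_mul_sq_le {w t : ℝ} (hw : 0 < w) (ht : 0 < t) :
    log t - 1 / 2 * w * t ^ 2 ≤ 1 / (2 * w) :=
  calc log t - 1 / 2 * w * t ^ 2 ≤ 1 * t - w / 2 * t ^ 2 := by
        linarith [log_le_sub_one_of_pos ht]
    _ ≤ 1 ^ 2 / (4 * (w / 2)) := mul_sub_mul_sq_le (by positivity) 1 t
    _ = 1 / (2 * w) := by ring

lemma exists_Icc_of_le_log_sub_half_mul_sq {w : ℝ} (hw : 0 < w) (C : ℝ) :
    ∃ R, ∀ t, 0 < t → C ≤ log t - 1 / 2 * w * t ^ 2 → t ∈ Icc (exp C) R := by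
  refine ⟨1 + (|1| + |-C|) / (w / 2), fun t ht hC => ⟨?_, ?_⟩⟩
  · have : 0 ≤ w * t ^ 2 := by positivity
    rw [← exp_log ht]
    exact exp_le_exp.2 (by linarith)
  · exact le_one_add_of_mul_sq_le (by positivity) (by linarith [log_le_sub_one_of_pos ht])

lemma strictConcaveOn_sum_apply_fst_snd {E F : Type*} [AddCommGroup E] [Module ℝ E]
    [AddCommGroup F] [Module ℝ F] {s : Set (E × F)} (hs : Convex ℝ s) {g : ι → E × F → ℝ}
    (hg : ∀ i, StrictConcaveOn ℝ s (g i)) :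
    StrictConcaveOn ℝ {x : (ι → E) × (ι → F) | ∀ i, (x.1 i, x.2 i) ∈ s}
      fun x => ∑ i, g i (x.1 i, x.2 i) := by
  refine ⟨fun x hx y hy a b ha hb hab i => hs (hx i) (hy i) ha hb hab, ?_⟩
  intro x hx y hy hne a b ha hb hab
  obtain ⟨i, hi⟩ : ∃ i, (x.1 i, x.2 i) ≠ (y.1 i, y.2 i) := by
    by_contra! h
    exact hne (Prod.ext (funext fun i => congrArg Prod.fst (h i))
      (funext fun i => congrArg Prod.snd (h i)))
  simp only [smul_eq_mul, Finset.mul_sum, ← Finset.sum_add_distrib]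
  refine Finset.sum_lt_sum (fun j _ => ?_) ⟨i, Finset.mem_univ i, ?_⟩
  · exact (hg j).concaveOn.2 (hx j) (hy j) ha.le hb.le hab
  · exact (hg i).2 (hx i) (hy i) hi ha hb hab

lemma abs_dotProduct_le (Y m : ι → ℝ) : |Y ⬝ᵥ m| ≤ (∑ i, |Y i|) * ‖m‖ :=
  calc |Y ⬝ᵥ m| ≤ ∑ i, |Y i| * |m i| := by
        simpa only [dotProduct, abs_mul] using
          Finset.abs_sum_le_sum_abs (fun i => Y i * m i) Finset.univ
    _ ≤ ∑ i, |Y i| * ‖m‖ := by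
        gcongr with i
        exact norm_le_pi_norm m i
    _ = (∑ i, |Y i|) * ‖m‖ := (Finset.sum_mul _ _ _).symm

lemma Matrix.PosSemidef.convexOn_dotProduct_mulVec {A : Matrix ι ι ℝ} (hA : A.PosSemidef) :
    ConvexOn ℝ univ fun x : ι → ℝ => x ⬝ᵥ A *ᵥ x := by
  refine ⟨convex_univ, fun x _ y _ a b ha hb hab => ?_⟩
  have key : a * (x ⬝ᵥ A *ᵥ x) + b * (y ⬝ᵥ A *ᵥ y) - (a • x + b • y) ⬝ᵥ A *ᵥ (a • x + b • y)
      = a * b * ((x - y) ⬝ᵥ A *ᵥ (x - y)) := by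
    obtain rfl : b = 1 - a := by linarith
    simp only [mulVec_add, mulVec_sub, mulVec_smul, add_dotProduct, sub_dotProduct,
      dotProduct_add, dotProduct_sub, smul_dotProduct, dotProduct_smul, smul_eq_mul]
    ring
  have hxy := hA.dotProduct_mulVec_nonneg (x - y)
  rw [star_trivial] at hxy
  simp only [smul_eq_mul]
  nlinarith [mul_nonneg (mul_nonneg ha hb) hxy]

lemma Matrix.PosDef.exists_pos_mul_sq_norm_le {A : Matrix ι ι ℝ} (hA : A.PosDef) :
    ∃ r > 0, ∀ x : ι → ℝ, r * ‖x‖ ^ 2 ≤ x ⬝ᵥ A *ᵥ x := by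
  rcases subsingleton_or_nontrivial (ι → ℝ) with h | h
  · exact ⟨1, one_pos, fun x => by simp [Subsingleton.elim x 0]⟩
  have hq : Continuous fun x : ι → ℝ => x ⬝ᵥ A *ᵥ x := by
    simp only [dotProduct, mulVec]
    fun_prop
  obtain ⟨u, hu, hmin⟩ := (isCompact_sphere (0 : ι → ℝ) 1).exists_isMinOn
    (NormedSpace.sphere_nonempty.2 zero_le_one) hq.continuousOn
  have hu0 : u ≠ 0 := by
    rintro rfl
    simp at hu
  refine ⟨u ⬝ᵥ A *ᵥ u, by simpa using hA.dotProduct_mulVec_pos hu0, fun x => ?_⟩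
  rcases eq_or_ne x 0 with rfl | hx
  · simp
  have hxn : 0 < ‖x‖ := norm_pos_iff.2 hx
  have hv : ‖x‖⁻¹ • x ∈ Metric.sphere (0 : ι → ℝ) 1 := by
    simp [norm_smul, hxn.ne']
  have hscale : x ⬝ᵥ A *ᵥ x = ‖x‖ ^ 2 * ((‖x‖⁻¹ • x) ⬝ᵥ A *ᵥ (‖x‖⁻¹ • x)) := by
    simp only [mulVec_smul, dotProduct_smul, smul_dotProduct, smul_eq_mul]
    field_simp
  rw [hscale, mul_comm]
  exact mul_le_mul_of_nonneg_left (hmin hv) (by positivity)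

lemma Matrix.PosDef.exists_dotProduct_sub_half_le {A : Matrix ι ι ℝ} (hA : A.PosDef)
    (Y : ι → ℝ) : ∃ k r, 0 < r ∧ ∀ m : ι → ℝ,
      Y ⬝ᵥ m - 1 / 2 * (m ⬝ᵥ A *ᵥ m) ≤ k * ‖m‖ - r * ‖m‖ ^ 2 := by
  obtain ⟨r, hr, hq⟩ := hA.exists_pos_mul_sq_norm_le
  refine ⟨∑ i, |Y i|, r / 2, half_pos hr, fun m => ?_⟩
  linarith [hq m, (le_abs_self _).trans (abs_dotProduct_le Y m)]

lemma IsCompact.exists_isMaxOn_of_superlevel_subset {X α : Type*} [TopologicalSpace X]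
    [LinearOrder α] [TopologicalSpace α] [ClosedIciTopology α] {S K : Set X} {f : X → α}
    (hK : IsCompact K) (hKS : K ⊆ S) (hf : ContinuousOn f K) {x₀ : X} (hx₀ : x₀ ∈ S)
    (hsub : ∀ x ∈ S, f x₀ ≤ f x → x ∈ K) : ∃ x ∈ S, IsMaxOn f S x := by
  obtain ⟨x, hxK, hmax⟩ := hK.exists_isMaxOn ⟨x₀, hsub x₀ hx₀ le_rfl⟩ hf
  refine ⟨x, hKS hxK, fun y hy => ?_⟩
  rcases le_total (f x₀) (f y) with h | h
  · exact hmax (hsub y hy h)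
  · exact h.trans (hmax (hsub x₀ hx₀ le_rfl))

noncomputable def plnElboTerm (y c w : ℝ) (z : ℝ × ℝ) : ℝ :=
  y * z.1 - exp (c + z.1 + z.2 ^ 2 / 2) + log z.2 - 1 / 2 * w * z.2 ^ 2

noncomputable def plnElbo (c Y : ι → ℝ) (Ω : Matrix ι ι ℝ) (x : (ι → ℝ) × (ι → ℝ)) : ℝ :=
  ∑ j, plnElboTerm (Y j) (c j) (Ω j j) (x.1 j, x.2 j) - 1 / 2 * (x.1 ⬝ᵥ Ω *ᵥ x.1)

def plnElboDomain (ι : Type*) : Set ((ι → ℝ) × (ι → ℝ)) := {x | ∀ j, 0 < x.2 j}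

lemma strictConcaveOn_plnElboTerm (y c : ℝ) {w : ℝ} (hw : 0 ≤ w) :
    StrictConcaveOn ℝ (univ ×ˢ Ioi 0) (plnElboTerm y c w) := by
  refine ⟨convex_univ.prod (convex_Ioi 0), ?_⟩
  rintro ⟨m₁, s₁⟩ ⟨-, hs₁⟩ ⟨m₂, s₂⟩ ⟨-, hs₂⟩ hne a b ha hb hab
  rw [mem_Ioi] at hs₁ hs₂
  simp only [plnElboTerm, Prod.smul_mk, Prod.mk_add_mk, smul_eq_mul]
  have hsq : (a * s₁ + b * s₂) ^ 2 = a * s₁ ^ 2 + b * s₂ ^ 2 - a * b * (s₁ - s₂) ^ 2 := by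
    obtain rfl : b = 1 - a := by linarith
    ring
  have hgap : 0 ≤ a * b * (s₁ - s₂) ^ 2 := by positivity
  have hexp_arg : c + (a * m₁ + b * m₂) + (a * s₁ + b * s₂) ^ 2 / 2
      ≤ a * (c + m₁ + s₁ ^ 2 / 2) + b * (c + m₂ + s₂ ^ 2 / 2) := by
    have hc : c = a * c + b * c := by rw [← add_mul, hab, one_mul]
    linarith
  have hquad : w * (a * s₁ + b * s₂) ^ 2 ≤ a * (w * s₁ ^ 2) + b * (w * s₂ ^ 2) := by
    rw [hsq]
    nlinarith [mul_nonneg hw hgap]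
  have hlog : a * log s₁ + b * log s₂ ≤ log (a * s₁ + b * s₂) :=
    strictConcaveOn_log_Ioi.concaveOn.2 hs₁ hs₂ ha.le hb.le hab
  rcases eq_or_ne s₁ s₂ with rfl | hs
  · have hm : m₁ ≠ m₂ := fun h => hne (by rw [h])
    have hexp := (exp_le_exp.2 hexp_arg).trans_lt
      (strictConvexOn_exp.2 trivial trivial (by simpa using hm) ha hb hab)
    rw [smul_eq_mul, smul_eq_mul] at hexp
    linear_combination hexp + hlog + 1 / 2 * hquad
  · have hexp := (exp_le_exp.2 hexp_arg).trans (convexOn_exp.2 trivial trivial ha.le hb.le hab)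
    rw [smul_eq_mul, smul_eq_mul] at hexp
    linear_combination hexp + strictConcaveOn_log_Ioi.2 hs₁ hs₂ hs ha hb hab + 1 / 2 * hquad

lemma strictConcaveOn_plnElbo (c Y : ι → ℝ) {Ω : Matrix ι ι ℝ} (hΩ : Ω.PosSemidef) :
    StrictConcaveOn ℝ (plnElboDomain ι) (plnElbo c Y Ω) := by
  have hdom : plnElboDomain ι = {x | ∀ j, (x.1 j, x.2 j) ∈ (univ : Set ℝ) ×ˢ Ioi 0} := by
    ext
    simp [plnElboDomain]
  have hsum := strictConcaveOn_sum_apply_fst_snd (convex_univ.prod (convex_Ioi 0))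
    fun j => strictConcaveOn_plnElboTerm (Y j) (c j) (hΩ.diag_nonneg (i := j))
  have hquad := (hΩ.convexOn_dotProduct_mulVec.comp_linearMap (LinearMap.fst ℝ (ι → ℝ) (ι → ℝ))).smul
    (by norm_num : (0 : ℝ) ≤ 1 / 2)
  rw [hdom]
  exact hsum.sub_convexOn (hquad.subset (subset_univ _) hsum.1)

lemma continuousOn_plnElbo (c Y : ι → ℝ) (Ω : Matrix ι ι ℝ) :
    ContinuousOn (plnElbo c Y Ω) (plnElboDomain ι) := by
  refine .sub (continuousOn_finsetSum _ fun j _ => ?_) ?_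
  · have hlog : ContinuousOn (fun x : (ι → ℝ) × (ι → ℝ) => log (x.2 j)) (plnElboDomain ι) :=
      .log (by fun_prop) fun x hx => (hx j).ne'
    simp only [plnElboTerm]
    fun_prop
  · simp only [dotProduct, mulVec]
    fun_prop

lemma plnElbo_le (c Y : ι → ℝ) (Ω : Matrix ι ι ℝ) (x : (ι → ℝ) × (ι → ℝ)) :
    plnElbo c Y Ω x ≤ (Y ⬝ᵥ x.1 - 1 / 2 * (x.1 ⬝ᵥ Ω *ᵥ x.1))
      + ∑ j, (log (x.2 j) - 1 / 2 * Ω j j * x.2 j ^ 2) := by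
  have hterm : ∀ j, plnElboTerm (Y j) (c j) (Ω j j) (x.1 j, x.2 j)
      ≤ Y j * x.1 j + (log (x.2 j) - 1 / 2 * Ω j j * x.2 j ^ 2) := fun j => by
    simp only [plnElboTerm]
    linarith [exp_pos (c j + x.1 j + x.2 j ^ 2 / 2)]
  have hsum := Finset.sum_le_sum fun j (_ : j ∈ Finset.univ) => hterm j
  rw [Finset.sum_add_distrib] at hsum
  simp only [plnElbo, dotProduct]
  linarith

lemma exists_isCompact_superlevel_plnElbo (c Y : ι → ℝ) {Ω : Matrix ι ι ℝ} (hΩ : Ω.PosDef)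
    (M : ℝ) : ∃ K ⊆ plnElboDomain ι, IsCompact K ∧
      ∀ x ∈ plnElboDomain ι, M ≤ plnElbo c Y Ω x → x ∈ K := by
  obtain ⟨k, r, hr, hquad⟩ := hΩ.exists_dotProduct_sub_half_le Y
  set L : ℝ := ∑ j, 1 / (2 * Ω j j)
  set H : ℝ := k ^ 2 / (4 * r)
  choose R hR using fun j =>
    exists_Icc_of_le_log_sub_half_mul_sq (hΩ.diag_pos (i := j)) (M - H - L)
  refine ⟨Metric.closedBall 0 (1 + (|k| + |L - M|) / r) ×ˢ Icc (fun _ => exp (M - H - L)) R,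
    fun x hx j => (exp_pos _).trans_le (hx.2.1 j),
    (isCompact_closedBall _ _).prod isCompact_Icc, fun x hx hM => ?_⟩
  set ℓ : ι → ℝ := fun j => log (x.2 j) - 1 / 2 * Ω j j * x.2 j ^ 2
  have hup : M ≤ (Y ⬝ᵥ x.1 - 1 / 2 * (x.1 ⬝ᵥ Ω *ᵥ x.1)) + ∑ j, ℓ j :=
    hM.trans (plnElbo_le c Y Ω x)
  have hℓ_le : ∀ j, ℓ j ≤ 1 / (2 * Ω j j) := fun j => log_sub_half_mul_sq_le hΩ.diag_pos (hx j)
  have hsum : ∑ j, ℓ j ≤ L := Finset.sum_le_sum fun j _ => hℓ_le j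
  have hsingle : ∀ j, ∑ j, ℓ j ≤ ℓ j + L := fun j => by
    have h := Finset.single_le_sum (f := fun j => 1 / (2 * Ω j j) - ℓ j)
      (fun j _ => sub_nonneg.2 (hℓ_le j)) (Finset.mem_univ j)
    have : 0 < 1 / (2 * Ω j j) := by have := hΩ.diag_pos (i := j); positivity
    rw [Finset.sum_sub_distrib] at h
    linarith
  have hH : Y ⬝ᵥ x.1 - 1 / 2 * (x.1 ⬝ᵥ Ω *ᵥ x.1) ≤ H :=
    (hquad x.1).trans (mul_sub_mul_sq_le hr k _)
  have hℓ_ge : ∀ j, M - H - L ≤ ℓ j := fun j => by linarith [hsingle j]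
  refine ⟨?_, fun j => (hR j _ (hx j) (hℓ_ge j)).1, fun j => (hR j _ (hx j) (hℓ_ge j)).2⟩
  rw [Metric.mem_closedBall, dist_zero_right]
  exact le_one_add_of_mul_sq_le hr (by linarith [hquad x.1])

theorem existsUnique_isMaxOn_plnElbo (c Y : ι → ℝ) {Ω : Matrix ι ι ℝ} (hΩ : Ω.PosDef) :
    ∃! x, x ∈ plnElboDomain ι ∧ IsMaxOn (plnElbo c Y Ω) (plnElboDomain ι) x := by
  have hx₀ : ((0 : ι → ℝ), fun _ => (1 : ℝ)) ∈ plnElboDomain ι := fun _ => one_pos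
  obtain ⟨K, hKS, hK, hsub⟩ :=
    exists_isCompact_superlevel_plnElbo c Y hΩ (plnElbo c Y Ω (0, 1))
  obtain ⟨x, hx, hmax⟩ := hK.exists_isMaxOn_of_superlevel_subset hKS
    ((continuousOn_plnElbo c Y Ω).mono hKS) hx₀ hsub
  exact ⟨x, ⟨hx, hmax⟩, fun y ⟨hy, hymax⟩ =>
    (strictConcaveOn_plnElbo c Y hΩ.posSemidef).eq_of_isMaxOn hymax hmax hy hx⟩

theorem pln_elbo_unique_maximizer_general
    (p : ℕ) (c Y : Fin p → ℝ)
    (Ω : Matrix (Fin p) (Fin p) ℝ) (hΩ : Ω.PosDef)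
    (J : (Fin p → ℝ) × (Fin p → ℝ) → ℝ)
    (hJ : ∀ m s : Fin p → ℝ,
      J (m, s) = ∑ j, (Y j * m j - Real.exp (c j + m j + (s j) ^ 2 / 2)
          + Real.log (s j) - (1 / 2 : ℝ) * Ω j j * (s j) ^ 2)
        - (1 / 2 : ℝ) * (m ⬝ᵥ Ω.mulVec m)) :
    ∃! mshat : (Fin p → ℝ) × (Fin p → ℝ),
      (∀ j, 0 < mshat.2 j) ∧
        ∀ ms : (Fin p → ℝ) × (Fin p → ℝ), (∀ j, 0 < ms.2 j) → J ms ≤ J mshat := by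
  obtain rfl : J = plnElbo c Y Ω := funext fun x => hJ x.1 x.2
  exact existsUnique_isMaxOn_plnElbo c Y hΩ

/-- the single-observation PLN ELBO
`J(m, s) = Σ_j [Y_j m_j − exp(c_j + m_j + s_j²/2) + log s_j − (1/2) Ω_jj s_j²]
          − (1/2) mᵀ Ω m`
attains a global maximum on `ℝᵖ × (0,∞)ᵖ`, and the maximizer is unique,
when `Y` has nonnegative entries and `Ω` is symmetric positive definite. -/
theorem pln_elbo_unique_maximizer
    (p : ℕ) (hp : 0 < p) (c Y : Fin p → ℝ) (hY : ∀ j, 0 ≤ Y j)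
    (Ω : Matrix (Fin p) (Fin p) ℝ) (hΩ : Ω.PosDef)
    (J : (Fin p → ℝ) × (Fin p → ℝ) → ℝ)
    (hJ : ∀ m s : Fin p → ℝ,
      J (m, s) = ∑ j, (Y j * m j - Real.exp (c j + m j + (s j) ^ 2 / 2)
          + Real.log (s j) - (1 / 2 : ℝ) * Ω j j * (s j) ^ 2)
        - (1 / 2 : ℝ) * (m ⬝ᵥ Ω.mulVec m)) :
    ∃! mshat : (Fin p → ℝ) × (Fin p → ℝ),
      (∀ j, 0 < mshat.2 j) ∧
        ∀ ms : (Fin p → ℝ) × (Fin p → ℝ), (∀ j, 0 < ms.2 j) → J ms ≤ J mshat :=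
  pln_elbo_unique_maximizer_general p c Y Ω hΩ J hJ
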